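/- Let G be an abelian subgroup of GL(V) preserving a pointed generating closed convex cone C, such that every element of G is semisimple with all eigenvalues on the unit circle (i.e., each element generates a bounded subgroup). Then G itself is bounded in GL(V), and hence has a fixed point in the interior of C. -/

import Mathlib

/-!
For a single `a ∈ G` with bounded powers, Cesàro averages of an orbit have a convergent
subsequence whose limit is fixed by `a`. If the orbit starts at a point whose `δ`-ball lies in
`C`, the orbit points keep balls of a uniform radius `δ / M` in `C` (where `M` bounds the powers of
`a`), so the limit is an interior fixed point; since `a` commutes with the elements already
treated, it preserves their common fixed subspace, and induction gives a common interior fixed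
point for every finite subset of `G`. In finite dimension the common fixed subspace of all of `G`
is that of a finite subset. Finally, if `v ∈ interior C` is fixed by `G`, the order interval
`{x | v - x ∈ C ∧ v + x ∈ C}` is bounded because `C` is closed and pointed, is `G`-invariant, and
contains a ball around `0`; this bounds the operator norms of `G`.
-/

open Set Filter Topology Bornology Metric

theorem birkhoffAverage_mem_convexHull {α E : Type*} [AddCommGroup E] [Module ℝ E]
    (f : α → α) (g : α → E) {n : ℕ} (hn : n ≠ 0) (x : α) :
    birkhoffAverage ℝ f g n x ∈ convexHull ℝ (range fun k => g (f^[k] x)) := by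
  have := (Finset.range n).centerMass_mem_convexHull (w := fun _ => (1 : ℝ))
    (z := fun k => g (f^[k] x)) (fun _ _ => zero_le_one) (by simp [Nat.pos_of_ne_zero hn])
    (fun k _ => mem_range_self k)
  simpa [Finset.centerMass, birkhoffAverage, birkhoffSum] using this

theorem map_birkhoffAverage_id {R M F : Type*} [DivisionSemiring R] [AddCommMonoid M]
    [Module R M] [FunLike F M M] [AddMonoidHomClass F M M] (f : F) (n : ℕ) (x : M) :
    f (birkhoffAverage R f id n x) = birkhoffAverage R f id n (f x) := by
  rw [map_birkhoffAverage R R f]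
  simp only [birkhoffAverage, birkhoffSum, Function.comp_apply, id_eq,
    ← Function.iterate_succ_apply' f, Function.iterate_succ_apply]

theorem ContinuousLinearMap.exists_fixedPoint_of_isBounded_orbit {E : Type*} [NormedAddCommGroup E]
    [NormedSpace ℝ E] [ProperSpace E] (f : E →L[ℝ] E) {K : Set E} (hKc : IsClosed K)
    (hK : Convex ℝ K) {x : E} (hxK : ∀ n, f^[n] x ∈ K)
    (hb : IsBounded (range fun n => f^[n] x)) : ∃ y ∈ K, f y = y := by
  set A : ℕ → E := fun n => birkhoffAverage ℝ f id (n + 1) x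
  have hA : ∀ n, A n ∈ convexHull ℝ (range fun n => f^[n] x) := fun n =>
    birkhoffAverage_mem_convexHull f id n.succ_ne_zero x
  obtain ⟨y, hy, φ, hφ, hlim⟩ := (isBounded_convexHull.2 hb).isCompact_closure.tendsto_subseq
    fun n => subset_closure (hA n)
  have hdiff : Tendsto (fun n => f (A n) - A n) atTop (𝓝 0) := by
    simp only [A, map_birkhoffAverage_id f]
    exact (tendsto_birkhoffAverage_apply_sub_birkhoffAverage ℝ hb).comp (tendsto_add_atTop_nat 1)
  refine ⟨y, closure_minimal (convexHull_min (range_subset_iff.2 hxK) hK) hKc hy, ?_⟩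
  have := ((f.continuous.tendsto y).comp hlim).sub hlim
  exact sub_eq_zero.1 (tendsto_nhds_unique this (hdiff.comp hφ.tendsto_atTop))

theorem setOf_closedBall_subset_eq_biInter {E : Type*} [SeminormedAddCommGroup E] (C : Set E)
    (ε : ℝ) : {x | closedBall x ε ⊆ C} = ⋂ u ∈ closedBall (0 : E) ε, (· + u) ⁻¹' C := by
  ext x
  simp only [mem_ofPred_eq, mem_iInter, mem_preimage, mem_closedBall_zero_iff]
  refine ⟨fun h u hu => h (by simpa [dist_eq_norm] using hu), fun h y hy => ?_⟩
  simpa using h (y - x) (by rwa [← dist_eq_norm])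

theorem IsClosed.setOf_closedBall_subset {E : Type*} [SeminormedAddCommGroup E] {C : Set E}
    (hC : IsClosed C) (ε : ℝ) : IsClosed {x | closedBall x ε ⊆ C} := by
  rw [setOf_closedBall_subset_eq_biInter]
  exact isClosed_biInter fun u _ => hC.preimage (continuous_add_const u)

theorem Convex.setOf_closedBall_subset {E : Type*} [SeminormedAddCommGroup E] [NormedSpace ℝ E]
    {C : Set E} (hC : Convex ℝ C) (ε : ℝ) : Convex ℝ {x | closedBall x ε ⊆ C} := by
  rw [setOf_closedBall_subset_eq_biInter]
  exact convex_iInter₂ fun u _ => hC.translate_preimage_left u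

theorem ContinuousLinearEquiv.closedBall_subset_image_closedBall {𝕜 E F : Type*}
    [NontriviallyNormedField 𝕜] [SeminormedAddCommGroup E] [NormedSpace 𝕜 E]
    [SeminormedAddCommGroup F] [NormedSpace 𝕜 F] (e : E ≃L[𝕜] F) {M : ℝ} (hM : 0 < M)
    (he : ‖(e.symm : F →L[𝕜] E)‖ ≤ M) (x : E) (δ : ℝ) :
    closedBall (e x) (δ / M) ⊆ e '' closedBall x δ := by
  intro y hy
  refine ⟨e.symm y, ?_, e.apply_symm_apply y⟩
  rw [mem_closedBall, dist_eq_norm] at hy ⊢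
  calc ‖e.symm y - x‖ = ‖(e.symm : F →L[𝕜] E) (y - e x)‖ := by simp
    _ ≤ M * ‖y - e x‖ := (e.symm : F →L[𝕜] E).le_of_opNorm_le he _
    _ ≤ M * (δ / M) := by gcongr
    _ = δ := mul_div_cancel₀ δ hM.ne'

theorem ContinuousLinearMap.opNorm_le_div_of_forall_closedBall {E F : Type*}
    [SeminormedAddCommGroup E] [NormedSpace ℝ E] [SeminormedAddCommGroup F] [NormedSpace ℝ F]
    (f : E →L[ℝ] F) {δ R : ℝ} (hδ : 0 < δ) (h : ∀ x ∈ closedBall (0 : E) δ, ‖f x‖ ≤ R) :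
    ‖f‖ ≤ R / δ := by
  have hR : 0 ≤ R := (norm_nonneg _).trans (h 0 (mem_closedBall_self hδ.le))
  refine f.opNorm_le_of_unit_norm (div_nonneg hR hδ.le) fun x hx => ?_
  have := h (δ • x) (by simp [norm_smul, hx, abs_of_pos hδ])
  rw [map_smul, norm_smul, Real.norm_of_nonneg hδ.le] at this
  exact (le_div_iff₀' hδ).2 this

theorem ContinuousLinearEquiv.exists_fixedPoint_mem_inter_interior {V : Type*}
    [NormedAddCommGroup V] [NormedSpace ℝ V] [ProperSpace V]
    {C F : Set V} (hC : IsClosed C) (hCc : Convex ℝ C) (hF : IsClosed F) (hFc : Convex ℝ F)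
    {a : V ≃L[ℝ] V} (ha : IsBounded (range fun n : ℤ => ((a ^ n : V ≃L[ℝ] V) : V →L[ℝ] V)))
    (haC : MapsTo a C C) (haF : MapsTo a F F) {v : V} (hv : v ∈ F ∩ interior C) :
    ∃ w ∈ F ∩ interior C, a w = w := by
  obtain ⟨M, hM⟩ := isBounded_iff_forall_norm_le.1 ha
  have hM' : ∀ n : ℤ, ‖((a ^ n : V ≃L[ℝ] V) : V →L[ℝ] V)‖ ≤ max M 1 := fun n =>
    (hM _ (mem_range_self n)).trans (le_max_left M 1)
  have hMpos : 0 < max M 1 := lt_max_of_lt_right one_pos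
  obtain ⟨δ, hδ, hvδ⟩ := nhds_basis_closedBall.mem_iff.1 (mem_interior_iff_mem_nhds.1 hv.2)
  have hpow : ∀ n : ℕ, (⇑a)^[n] = ⇑(a ^ n) := fun n =>
    (hom_coe_pow DFunLike.coe rfl (fun _ _ => rfl) a n).symm
  have horbit : ∀ n : ℕ, (⇑a)^[n] v ∈ F ∩ {x | closedBall x (δ / max M 1) ⊆ C} := by
    refine fun n => ⟨haF.iterate n hv.1, ?_⟩
    have hinv : ‖((a ^ n).symm : V →L[ℝ] V)‖ ≤ max M 1 := by
      have : (a ^ n).symm = a ^ (-n : ℤ) := by rw [zpow_neg, zpow_natCast]; rfl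
      exact this ▸ hM' (-n)
    rw [hpow]
    refine ((a ^ n).closedBall_subset_image_closedBall hMpos hinv v δ).trans ?_
    rw [← hpow, image_subset_iff]
    exact hvδ.trans (haC.iterate n)
  have hbounded : IsBounded (range fun n : ℕ => (⇑a)^[n] v) := by
    refine isBounded_iff_forall_norm_le.2 ⟨max M 1 * ‖v‖, ?_⟩
    rintro _ ⟨n, rfl⟩
    simpa [hpow] using ((a ^ n : V ≃L[ℝ] V) : V →L[ℝ] V).le_of_opNorm_le (hM' n) v
  obtain ⟨w, ⟨hwF, hwball⟩, hw⟩ := (a : V →L[ℝ] V).exists_fixedPoint_of_isBounded_orbit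
    (hF.inter (hC.setOf_closedBall_subset _)) (hFc.inter (hCc.setOf_closedBall_subset _))
    horbit hbounded
  exact ⟨w, ⟨hwF, mem_interior_iff_mem_nhds.2
    (mem_of_superset (closedBall_mem_nhds w (div_pos hδ hMpos)) hwball)⟩, hw⟩

section CommutingFamily

variable {V : Type*} [NormedAddCommGroup V] [NormedSpace ℝ V] [FiniteDimensional ℝ V]
  {ι : Type*} {C : Set V} {g : ι → V ≃L[ℝ] V}

theorem exists_mem_interior_forall_mem_apply_eq_self (hC : IsClosed C) (hCc : Convex ℝ C)
    (hint : (interior C).Nonempty) (hcomm : ∀ i j, Commute (g i) (g j))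
    (hgC : ∀ i, MapsTo (g i) C C)
    (hg : ∀ i, IsBounded (range fun n : ℤ => ((g i ^ n : V ≃L[ℝ] V) : V →L[ℝ] V)))
    (t : Finset ι) : ∃ w ∈ interior C, ∀ i ∈ t, g i w = w := by
  classical
  induction t using Finset.induction_on with
  | empty => exact hint.imp fun w hw => ⟨hw, by simp⟩
  | insert j t _ ih =>
    obtain ⟨v, hv, hvt⟩ := ih
    set F : Submodule ℝ V := t.inf fun i => LinearMap.fixedSubmodule (g i : V →ₗ[ℝ] V)
    have hmemF : ∀ x, x ∈ F ↔ ∀ i ∈ t, g i x = x := fun x => by simp [F, Submodule.mem_finsetInf]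
    have hjF : MapsTo (g j) F F := fun x hx => (hmemF _).2 fun i hi => by
      change (g i * g j) x = g j x
      rw [(hcomm i j).eq]
      exact congrArg (g j) ((hmemF x).1 hx i hi)
    obtain ⟨w, ⟨hwF, hw⟩, hwj⟩ := (g j).exists_fixedPoint_mem_inter_interior hC hCc
      F.closed_of_finiteDimensional F.convex (hg j) (hgC j) hjF ⟨(hmemF v).2 hvt, hv⟩
    exact ⟨w, hw, (Finset.forall_mem_insert _ _ _).2 ⟨hwj, (hmemF w).1 hwF⟩⟩

theorem exists_mem_interior_forall_apply_eq_self (hC : IsClosed C) (hCc : Convex ℝ C)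
    (hint : (interior C).Nonempty) (hcomm : ∀ i j, Commute (g i) (g j))
    (hgC : ∀ i, MapsTo (g i) C C)
    (hg : ∀ i, IsBounded (range fun n : ℤ => ((g i ^ n : V ≃L[ℝ] V) : V →L[ℝ] V))) :
    ∃ w ∈ interior C, ∀ i, g i w = w := by
  obtain ⟨t, ht⟩ := Finset.exists_inf_le fun i => LinearMap.fixedSubmodule (g i : V →ₗ[ℝ] V)
  obtain ⟨w, hw, hwt⟩ := exists_mem_interior_forall_mem_apply_eq_self hC hCc hint hcomm hgC hg t
  refine ⟨w, hw, fun i => ?_⟩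
  simpa using ht i (Submodule.mem_finsetInf.2 fun j hj => by simpa using hwt j hj)

end CommutingFamily

section Cone

variable {V : Type*} [NormedAddCommGroup V] [NormedSpace ℝ V] {C : Set V}

theorem Convex.interior_nonempty_of_forall_eq_sub [FiniteDimensional ℝ V] (hC : Convex ℝ C)
    (hgen : ∀ v : V, ∃ c₁ ∈ C, ∃ c₂ ∈ C, v = c₁ - c₂) : (interior C).Nonempty := by
  obtain ⟨c, hc, -⟩ := hgen 0
  rw [hC.interior_nonempty_iff_affineSpan_eq_top,
    AffineSubspace.affineSpan_eq_top_iff_vectorSpan_eq_top_of_nonempty ℝ V V ⟨c, hc⟩, eq_top_iff]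
  intro v _
  obtain ⟨c₁, h₁, c₂, h₂, rfl⟩ := hgen v
  exact vsub_set_subset_vectorSpan ℝ C (vsub_mem_vsub h₁ h₂)

theorem isBounded_setOf_sub_mem_and_add_mem [ProperSpace V] (hC : IsClosed C)
    (hcone : ∀ (t : ℝ) (v : V), 0 ≤ t → v ∈ C → t • v ∈ C) (hpointed : C ∩ (-C) = {0})
    (v : V) : IsBounded {x | v - x ∈ C ∧ v + x ∈ C} := by
  by_contra hunb
  simp only [isBounded_iff_forall_norm_le, not_exists, not_forall, not_le] at hunb
  choose x hx hxk using fun k : ℕ => hunb k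
  have hpos : ∀ k, 0 < ‖x k‖ := fun k => (Nat.cast_nonneg k).trans_lt (hxk k)
  obtain ⟨z, hz, φ, hφ, hlim⟩ := (isCompact_sphere (0 : V) 1).tendsto_subseq (x := fun k =>
    ‖x k‖⁻¹ • x k) fun k => by simp [norm_smul, (hpos k).ne']
  have hscale : Tendsto (fun k => ‖x (φ k)‖⁻¹) atTop (𝓝 0) :=
    tendsto_inv_atTop_zero.comp <| tendsto_atTop_mono
      (fun k => (Nat.cast_le.2 hφ.le_apply).trans (hxk (φ k)).le) tendsto_natCast_atTop_atTop
  have hmemC : ∀ {w : V} {y : ℕ → V}, (∀ k, v + y k ∈ C) →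
      Tendsto (fun k => ‖x (φ k)‖⁻¹ • y (φ k)) atTop (𝓝 w) → w ∈ C := fun hy hw =>
    hC.mem_of_tendsto (by simpa using (hscale.smul_const v).add hw) <| .of_forall fun k => by
      simpa [smul_add] using hcone _ _ (inv_nonneg.2 (norm_nonneg _)) (hy (φ k))
  have hz0 : z ∈ C ∩ -C := ⟨hmemC (fun k => (hx k).2) hlim,
    hmemC (y := fun k => -x k) (fun k => by simpa [sub_eq_add_neg] using (hx k).1)
      (by simpa using hlim.neg)⟩
  rw [hpointed, mem_singleton_iff] at hz0
  simp [hz0] at hz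

theorem isBounded_of_forall_mapsTo_of_apply_eq_self [ProperSpace V] (hC : IsClosed C)
    (hcone : ∀ (t : ℝ) (v : V), 0 ≤ t → v ∈ C → t • v ∈ C) (hpointed : C ∩ (-C) = {0})
    {v : V} (hv : v ∈ interior C) {S : Set (V →L[ℝ] V)} (hS : ∀ f ∈ S, MapsTo f C C ∧ f v = v) :
    IsBounded S := by
  obtain ⟨R, hR⟩ :=
    isBounded_iff_forall_norm_le.1 (isBounded_setOf_sub_mem_and_add_mem hC hcone hpointed v)
  obtain ⟨δ, hδ, hvδ⟩ := nhds_basis_closedBall.mem_iff.1 (mem_interior_iff_mem_nhds.1 hv)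
  refine isBounded_iff_forall_norm_le.2 ⟨R / δ, fun f hf => ?_⟩
  refine f.opNorm_le_div_of_forall_closedBall hδ fun x hx => hR _ ?_
  have hCx : ∀ y ∈ ({v - x, v + x} : Set V), f y ∈ C := fun y hy => (hS f hf).1 <| hvδ <| by
    rcases hy with rfl | rfl <;> simpa [dist_eq_norm] using hx
  simpa [(hS f hf).2] using hCx

end Cone

/-- Lemma 3.2, last part: an abelian subgroup `G` of `GL(V)` preserving a pointed
generating closed convex cone `C`, all of whose elements are elliptic (each generates a
relatively compact subgroup of `GL(V)`), is itself bounded in `GL(V)`, and hence has a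
fixed point in the interior of `C`. -/
theorem abelian_elliptic_elements_bounded_and_fixed_point
    {V : Type*} [NormedAddCommGroup V] [NormedSpace ℝ V] [FiniteDimensional ℝ V]
    (C : Set V) (hCclosed : IsClosed C) (hCconv : Convex ℝ C)
    (hCcone : ∀ (t : ℝ) (v : V), 0 ≤ t → v ∈ C → t • v ∈ C)
    (hCpointed : C ∩ (-C) = {(0 : V)})
    (hCgen : ∀ v : V, ∃ c₁ ∈ C, ∃ c₂ ∈ C, v = c₁ - c₂)
    (G : Subgroup (V ≃L[ℝ] V))
    (hab : ∀ g ∈ G, ∀ h ∈ G, g * h = h * g)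
    (hCinv : ∀ g ∈ G, g '' C = C)
    (hell : ∀ g ∈ G, IsCompact (closure
      (Set.range (fun n : ℤ => ((g ^ n : V ≃L[ℝ] V) : V →L[ℝ] V))))) :
    IsCompact (closure ((fun g : V ≃L[ℝ] V => (g : V →L[ℝ] V)) '' (G : Set (V ≃L[ℝ] V)))) ∧
      ∃ v ∈ interior C, ∀ g ∈ G, g v = v := by
  have hmaps : ∀ g ∈ G, MapsTo g C C := fun g hg => mapsTo_iff_image_subset.2 (hCinv g hg).subset
  obtain ⟨v, hv, hfix⟩ := exists_mem_interior_forall_apply_eq_self (g := ((↑) : G → V ≃L[ℝ] V))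
    hCclosed hCconv (hCconv.interior_nonempty_of_forall_eq_sub hCgen)
    (fun g h => hab g g.2 h h.2) (fun g => hmaps g g.2)
    (fun g => (hell g g.2).isBounded.subset subset_closure)
  refine ⟨IsBounded.isCompact_closure ?_, v, hv, fun g hg => hfix ⟨g, hg⟩⟩
  refine isBounded_of_forall_mapsTo_of_apply_eq_self hCclosed hCcone hCpointed hv ?_
  rintro _ ⟨g, hg, rfl⟩
  exact ⟨hmaps g hg, hfix ⟨g, hg⟩⟩
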